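/- arXiv:1507.00169 — 3 statements merged into one kernel-verified Lean document; each statement's English description precedes it below -/
import Mathlib

section
/- Let T be an n×n row-stochastic matrix partitioned into L×L blocks T_{st} (block s,t of size n_s × n_t, with Σ n_s = n), such that each block satisfies T_{st} = α_{st} R_{st} for some scalar α_{st} and row-stochastic matrix R_{st}. Let 𝔗 = (α_{st}) be the L×L aggregated matrix. If v is a left eigenvector of T with eigenvalue λ, and the layer-aggregated vector 𝔳 ∈ ℝ^L defined by 𝔳_k = Σ_i v^{(k)}_i (sum of entries of v in block k) is nonzero, then λ is an eigenvalue of 𝔗 with left eigenvector 𝔳. -/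
/-!
Every row of the block `T_{st} = α_{st} R_{st}` sums to `α_{st}`, so summing `(v T)_{⟨t, j⟩}`
over `j` turns the contribution of layer `s` into `α_{st} 𝔳_s`: layer-aggregation carries
`v T` to `𝔳 α`, and `v T = λ v` to `𝔳 α = λ 𝔳`.
-/

open Matrix Finset

/-- A (possibly rectangular) matrix is row-stochastic: nonnegative entries,
each row sums to 1. -/
def RowStochastic {ι κ : Type*} [Fintype κ] (M : Matrix ι κ ℝ) : Prop :=
  (∀ i j, 0 ≤ M i j) ∧ ∀ i, ∑ j, M i j = 1

section LayerSum

variable {ι : Type*} {κ : ι → Type*} [∀ s, Fintype (κ s)] {R : Type*}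

def layerSum [AddCommMonoid R] (v : (Σ s, κ s) → R) (k : ι) : R :=
  ∑ i, v ⟨k, i⟩

theorem layerSum_smul {S : Type*} [Monoid S] [AddCommMonoid R] [DistribMulAction S R] (c : S)
    (v : (Σ s, κ s) → R) : layerSum (c • v) = c • layerSum v := by
  funext k
  exact Finset.smul_sum.symm

theorem layerSum_vecMul [Fintype ι] [CommSemiring R] {T : Matrix (Σ s, κ s) (Σ s, κ s) R}
    {α : Matrix ι ι R} (hrow : ∀ s t i, ∑ j, T ⟨s, i⟩ ⟨t, j⟩ = α s t)
    (v : (Σ s, κ s) → R) : layerSum (v ᵥ* T) = layerSum v ᵥ* α := by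
  funext t
  calc layerSum (v ᵥ* T) t
      = ∑ x : Σ s, κ s, v x * ∑ j, T x ⟨t, j⟩ := by
        simp only [layerSum, vecMul, dotProduct, mul_sum]
        exact sum_comm
    _ = ∑ s, ∑ i, v ⟨s, i⟩ * α s t := by
        rw [← univ_sigma_univ, sum_sigma]
        simp only [hrow]
    _ = (layerSum v ᵥ* α) t := by
        simp only [layerSum, vecMul, dotProduct, sum_mul]

end LayerSum

theorem rowSum_eq_of_eq_smul_rowStochastic {ι κ : Type*} [Fintype κ] {M R : Matrix ι κ ℝ}
    {a : ℝ} (hR : RowStochastic R) (hM : ∀ i j, M i j = a * R i j) (i : ι) :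
    ∑ j, M i j = a := by
  simp only [hM, ← mul_sum, hR.2 i, mul_one]

theorem layer_aggregation_eigenvalue_general {L : ℕ} {n : Fin L → ℕ}
    (T : Matrix ((s : Fin L) × Fin (n s)) ((s : Fin L) × Fin (n s)) ℝ)
    (α : Matrix (Fin L) (Fin L) ℝ)
    (hblock : ∀ s t : Fin L, ∃ R : Matrix (Fin (n s)) (Fin (n t)) ℝ,
      RowStochastic R ∧ ∀ i j, T ⟨s, i⟩ ⟨t, j⟩ = α s t * R i j)
    (lam : ℝ) (v : ((s : Fin L) × Fin (n s)) → ℝ)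
    (hv : v ᵥ* T = lam • v)
    (𝔳 : Fin L → ℝ) (h𝔳 : ∀ k, 𝔳 k = ∑ i, v ⟨k, i⟩)
    (hne : 𝔳 ≠ 0) :
    𝔳 ᵥ* α = lam • 𝔳 ∧ 𝔳 ≠ 0 := by
  have hrow : ∀ s t i, ∑ j, T ⟨s, i⟩ ⟨t, j⟩ = α s t := fun s t i => by
    obtain ⟨R, hR, hTR⟩ := hblock s t
    exact rowSum_eq_of_eq_smul_rowStochastic hR hTR i
  obtain rfl : 𝔳 = layerSum v := funext h𝔳
  exact ⟨by rw [← layerSum_vecMul hrow, hv, layerSum_smul], hne⟩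

/-- If `T` is a row-stochastic block matrix with `T_{st} = α_{st} R_{st}` for
row-stochastic `R_{st}`, `v` is a left eigenvector of `T` with eigenvalue `lam`,
and the layer-aggregated vector `𝔳` (summing `v` over each layer) is nonzero,
then `lam` is an eigenvalue of the aggregated matrix `α` with left eigenvector `𝔳`. -/
theorem layer_aggregation_eigenvalue {L : ℕ} {n : Fin L → ℕ}
    (T : Matrix ((s : Fin L) × Fin (n s)) ((s : Fin L) × Fin (n s)) ℝ)
    (hT : RowStochastic T)
    (α : Matrix (Fin L) (Fin L) ℝ)
    (hblock : ∀ s t : Fin L, ∃ R : Matrix (Fin (n s)) (Fin (n t)) ℝ,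
      RowStochastic R ∧ ∀ i j, T ⟨s, i⟩ ⟨t, j⟩ = α s t * R i j)
    (lam : ℝ) (v : ((s : Fin L) × Fin (n s)) → ℝ)
    (hv : v ᵥ* T = lam • v)
    (𝔳 : Fin L → ℝ) (h𝔳 : ∀ k, 𝔳 k = ∑ i, v ⟨k, i⟩)
    (hne : 𝔳 ≠ 0) :
    𝔳 ᵥ* α = lam • 𝔳 ∧ 𝔳 ≠ 0 :=
  layer_aggregation_eigenvalue_general T α hblock lam v hv 𝔳 h𝔳 hne
end

section
/- Let T be a 2n×2n row-stochastic matrix of block form T = [[β T(A_1), (1−β) T^I_{12}], [(1−β) T^I_{21}, β T(A_2)]], where β is a constant, T^I = [[0, T^I_{12}],[T^I_{21}, 0]] is a row-stochastic matrix (the transition matrix of the bipartite inter-layer network), and the diagonal blocks β T(A_1), β T(A_2) have uniform columns. If λ is an eigenvalue of T^I with λ ≠ 1 and λ ≠ −1, then (1−β)λ is an eigenvalue of T, with the same eigenvector. -/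
open Matrix Finset

/-!
Split a left eigenvector `v = (v₁, v₂)` of the bipartite matrix `Tᴵ = [[0, B], [C, 0]]`
along the two layers, so that `v₁ B = λ v₂` and `v₂ C = λ v₁`. Since `B` and `C` have unit
row sums, summing the entries gives `Σ v₁ = λ Σ v₂` and `Σ v₂ = λ Σ v₁`, hence
`Σ v₁ = λ² Σ v₁`, and both sums vanish when `λ² ≠ 1`. A block with uniform columns maps every
vector with zero entry sum to `0`, so the diagonal blocks of `T` contribute nothing to `v T`,
and the off-diagonal blocks `(1 - β) B`, `(1 - β) C` give `v T = (1 - β) v Tᴵ = (1 - β) λ v`.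
-/

namespace Matrix

variable {ι κ R : Type*} [Fintype ι]

theorem vecMul_eq_zero_of_columns_const [Semiring R] {A : Matrix ι κ R} (hA : ∀ j i i', A i j = A i' j)
    {v : ι → R} (hv : ∑ i, v i = 0) : v ᵥ* A = 0 := by
  ext j
  rcases isEmpty_or_nonempty ι with hι | ⟨⟨i₀⟩⟩
  · simp [vecMul, dotProduct]
  · calc (v ᵥ* A) j = ∑ i, v i * A i₀ j := Finset.sum_congr rfl fun i _ =>
        congrArg (v i * ·) (hA j i i₀)
      _ = 0 := by rw [← Finset.sum_mul, hv, zero_mul]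

variable [Fintype κ]

section Semiring

variable [Semiring R]

theorem sum_vecMul_of_mulVec_one {B : Matrix ι κ R} (hB : B *ᵥ 1 = 1) (v : ι → R) :
    ∑ j, (v ᵥ* B) j = ∑ i, v i := by
  rw [← dotProduct_one, ← dotProduct_mulVec, hB, dotProduct_one]

theorem mulVec_one_of_fromBlocks_zero_zero {B : Matrix ι κ R} {C : Matrix κ ι R}
    (h : fromBlocks 0 B C 0 *ᵥ 1 = 1) : B *ᵥ 1 = 1 ∧ C *ᵥ 1 = 1 := by
  rw [fromBlocks_mulVec] at h
  exact ⟨funext fun i => by simpa using congrFun h (Sum.inl i),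
    funext fun j => by simpa using congrFun h (Sum.inr j)⟩

end Semiring

section CommRing

variable [CommRing R]

theorem vecMul_fromBlocks_of_vecMul_diag_eq_zero {A₁ : Matrix ι ι R} {A₂ : Matrix κ κ R}
    (B : Matrix ι κ R) (C : Matrix κ ι R) (c : R) {v : ι ⊕ κ → R}
    (h₁ : (v ∘ Sum.inl) ᵥ* A₁ = 0) (h₂ : (v ∘ Sum.inr) ᵥ* A₂ = 0) :
    v ᵥ* fromBlocks A₁ (c • B) (c • C) A₂ = c • (v ᵥ* fromBlocks 0 B C 0) := by
  ext (i | j) <;> simp [vecMul_fromBlocks, h₁, h₂, vecMul_smul]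

variable [IsDomain R]

theorem sum_eq_zero_of_vecMul_swap {B : Matrix ι κ R} {C : Matrix κ ι R}
    (hB : B *ᵥ 1 = 1) (hC : C *ᵥ 1 = 1) {lam : R} (hlam : lam ^ 2 ≠ 1)
    {v₁ : ι → R} {v₂ : κ → R} (h₁ : v₁ ᵥ* B = lam • v₂) (h₂ : v₂ ᵥ* C = lam • v₁) :
    ∑ i, v₁ i = 0 := by
  have hsum₁ : ∑ i, v₁ i = lam * ∑ j, v₂ j := by
    rw [← sum_vecMul_of_mulVec_one hB, h₁, Finset.mul_sum]; rfl
  have hsum₂ : ∑ j, v₂ j = lam * ∑ i, v₁ i := by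
    rw [← sum_vecMul_of_mulVec_one hC, h₂, Finset.mul_sum]; rfl
  have : (1 - lam ^ 2) * ∑ i, v₁ i = 0 := by
    linear_combination hsum₁ + lam * hsum₂
  exact (mul_eq_zero.mp this).resolve_left (sub_ne_zero.mpr (Ne.symm hlam))

theorem sum_inl_and_sum_inr_eq_zero_of_vecMul_fromBlocks_zero_zero {B : Matrix ι κ R} {C : Matrix κ ι R}
    (hrows : fromBlocks 0 B C 0 *ᵥ 1 = 1) {lam : R} (hlam : lam ^ 2 ≠ 1) {v : ι ⊕ κ → R}
    (hv : v ᵥ* fromBlocks 0 B C 0 = lam • v) :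
    ∑ i, v (Sum.inl i) = 0 ∧ ∑ j, v (Sum.inr j) = 0 := by
  obtain ⟨hB, hC⟩ := mulVec_one_of_fromBlocks_zero_zero hrows
  rw [vecMul_fromBlocks] at hv
  have h₁ : (v ∘ Sum.inl) ᵥ* B = lam • (v ∘ Sum.inr) :=
    funext fun j => by simpa using congrFun hv (Sum.inr j)
  have h₂ : (v ∘ Sum.inr) ᵥ* C = lam • (v ∘ Sum.inl) :=
    funext fun i => by simpa using congrFun hv (Sum.inl i)
  exact ⟨sum_eq_zero_of_vecMul_swap hB hC hlam h₁ h₂,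
    sum_eq_zero_of_vecMul_swap hC hB hlam h₂ h₁⟩

end CommRing

end Matrix

theorem interlayer_eigenvalue_scaling_general {n : ℕ} (β : ℝ)
    (T TI : Matrix (Fin n ⊕ Fin n) (Fin n ⊕ Fin n) ℝ)
    (TA1 TA2 : Matrix (Fin n) (Fin n) ℝ)
    (hTI : RowStochastic TI)
    (hTIll : ∀ i j, TI (Sum.inl i) (Sum.inl j) = 0)
    (hTIrr : ∀ i j, TI (Sum.inr i) (Sum.inr j) = 0)
    (hTll : ∀ i j, T (Sum.inl i) (Sum.inl j) = β * TA1 i j)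
    (hTlr : ∀ i j, T (Sum.inl i) (Sum.inr j) = (1 - β) * TI (Sum.inl i) (Sum.inr j))
    (hTrl : ∀ i j, T (Sum.inr i) (Sum.inl j) = (1 - β) * TI (Sum.inr i) (Sum.inl j))
    (hTrr : ∀ i j, T (Sum.inr i) (Sum.inr j) = β * TA2 i j)
    (huniform1 : ∀ (j i i' : Fin n), β * TA1 i j = β * TA1 i' j)
    (huniform2 : ∀ (j i i' : Fin n), β * TA2 i j = β * TA2 i' j)
    (lam : ℝ) (hlam1 : lam ≠ 1) (hlam2 : lam ≠ -1)
    (v : Fin n ⊕ Fin n → ℝ)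
    (hv : v ᵥ* TI = lam • v) :
    v ᵥ* T = ((1 - β) * lam) • v := by
  have hTI_blocks : TI = fromBlocks 0 TI.toBlocks₁₂ TI.toBlocks₂₁ 0 := by
    ext (i | i) (j | j) <;> simp [hTIll, hTIrr, toBlocks₁₂, toBlocks₂₁]
  have hT_blocks : T = fromBlocks (β • TA1) ((1 - β) • TI.toBlocks₁₂)
      ((1 - β) • TI.toBlocks₂₁) (β • TA2) := by
    ext (i | i) (j | j) <;> simp [hTll, hTlr, hTrl, hTrr, toBlocks₁₂, toBlocks₂₁]
  have hrows : TI *ᵥ 1 = 1 := funext fun i => by simpa [mulVec, dotProduct] using hTI.2 i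
  rw [hTI_blocks] at hv hrows
  obtain ⟨hsum₁, hsum₂⟩ := sum_inl_and_sum_inr_eq_zero_of_vecMul_fromBlocks_zero_zero hrows
    (by simpa [sq_eq_one_iff] using ⟨hlam1, hlam2⟩) hv
  rw [hT_blocks, vecMul_fromBlocks_of_vecMul_diag_eq_zero _ _ _
    (vecMul_eq_zero_of_columns_const (by simpa using huniform1) hsum₁)
    (vecMul_eq_zero_of_columns_const (by simpa using huniform2) hsum₂), hv, smul_smul]

/-- Two-layer supra-transition matrix `T = [[β T(A₁), (1−β) Tᴵ₁₂],[(1−β) Tᴵ₂₁, β T(A₂)]]`: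
if `lam ≠ ±1` is an eigenvalue of the bipartite inter-layer transition matrix `Tᴵ`,
then `(1−β)·lam` is an eigenvalue of `T`, with the same (left) eigenvector. -/
theorem interlayer_eigenvalue_scaling {n : ℕ} (β : ℝ)
    (T TI : Matrix (Fin n ⊕ Fin n) (Fin n ⊕ Fin n) ℝ)
    (TA1 TA2 : Matrix (Fin n) (Fin n) ℝ)
    (hTA1 : RowStochastic TA1) (hTA2 : RowStochastic TA2)
    (hT : RowStochastic T) (hTI : RowStochastic TI)
    (hTIll : ∀ i j, TI (Sum.inl i) (Sum.inl j) = 0)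
    (hTIrr : ∀ i j, TI (Sum.inr i) (Sum.inr j) = 0)
    (hTll : ∀ i j, T (Sum.inl i) (Sum.inl j) = β * TA1 i j)
    (hTlr : ∀ i j, T (Sum.inl i) (Sum.inr j) = (1 - β) * TI (Sum.inl i) (Sum.inr j))
    (hTrl : ∀ i j, T (Sum.inr i) (Sum.inl j) = (1 - β) * TI (Sum.inr i) (Sum.inl j))
    (hTrr : ∀ i j, T (Sum.inr i) (Sum.inr j) = β * TA2 i j)
    (huniform1 : ∀ (j i i' : Fin n), β * TA1 i j = β * TA1 i' j)
    (huniform2 : ∀ (j i i' : Fin n), β * TA2 i j = β * TA2 i' j)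
    (lam : ℝ) (hlam1 : lam ≠ 1) (hlam2 : lam ≠ -1)
    (v : Fin n ⊕ Fin n → ℝ) (hvne : v ≠ 0)
    (hv : v ᵥ* TI = lam • v) :
    v ᵥ* T = ((1 - β) * lam) • v :=
  interlayer_eigenvalue_scaling_general β T TI TA1 TA2 hTI hTIll hTIrr hTll hTlr hTrl hTrr huniform1
    huniform2 lam hlam1 hlam2 v hv
end

section
/- Let T̂ be the mean-field supra-transition matrix of a two-layer network with known intra-layer topology: T̂ = [[(1−α₁₂) T(A₁), T̂₁₂], [T̂₂₁, (1−α₂₁) T(A₂)]], where T̂₁₂ is the n₁×n₂ matrix with all entries m/(n₂(n₁ d̂₁ + m)), T̂₂₁ is the n₂×n₁ matrix with all entries m/(n₁(n₂ d̂₂ + m)), α₁₂ = m/(n₁ d̂₁ + m), α₂₁ = m/(n₂ d̂₂ + m), and T(A_i) are row-stochastic. Then every eigenvalue of (1−α₁₂)T(A₁) other than its largest eigenvalue 1−α₁₂, and every eigenvalue of (1−α₂₁)T(A₂) other than its largest eigenvalue 1−α₂₁, is an eigenvalue of T̂. -/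
open Matrix Finset

/-! A left eigenvector `u` of a matrix with constant row sums `s`, for an eigenvalue `λ ≠ s`,
is orthogonal to the all-ones vector (the right eigenvector for `s`), so its entries sum to zero.
A block whose rows are all equal therefore annihilates `u`, and padding `u` by zero gives a left
eigenvector of the whole block matrix for the same eigenvalue `λ`. -/

namespace Matrix

variable {R : Type*} {ι κ : Type*} [Fintype ι]

theorem vecMul_replicateRow [NonUnitalNonAssocSemiring R] (u : ι → R) (c : κ → R) :
    u ᵥ* replicateRow ι c = (∑ i, u i) • c := by
  ext j
  simp [vecMul, dotProduct, replicateRow_apply, sum_mul]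

theorem sum_eq_zero_of_vecMul_eq_smul [CommRing R] [NoZeroDivisors R] {M : Matrix ι ι R}
    {s lam : R} (hM : M *ᵥ 1 = s • 1) (hlam : lam ≠ s) {u : ι → R} (hu : u ᵥ* M = lam • u) :
    ∑ i, u i = 0 := by
  have h : lam * ∑ i, u i = s * ∑ i, u i :=
    calc lam * ∑ i, u i = (u ᵥ* M) ⬝ᵥ 1 := by
          rw [hu, smul_dotProduct, dotProduct_one, smul_eq_mul]
      _ = u ⬝ᵥ (M *ᵥ 1) := (dotProduct_mulVec u M 1).symm
      _ = s * ∑ i, u i := by rw [hM, dotProduct_smul, dotProduct_one, smul_eq_mul]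
  have h' : (lam - s) * ∑ i, u i = 0 := by rw [sub_mul, h, sub_self]
  exact (mul_eq_zero.mp h').resolve_left (sub_ne_zero.mpr hlam)

variable [Fintype κ] [NonUnitalNonAssocSemiring R]

theorem exists_vecMul_fromBlocks_eq_smul_of_inl {A : Matrix ι ι R} {B : Matrix ι κ R}
    {C : Matrix κ ι R} {D : Matrix κ κ R} {lam : R} {u : ι → R} (hu0 : u ≠ 0)
    (hu : u ᵥ* A = lam • u) (hB : u ᵥ* B = 0) :
    ∃ v ≠ 0, v ᵥ* fromBlocks A B C D = lam • v := by
  refine ⟨Sum.elim u 0, fun h => hu0 (funext fun i => by simpa using congrFun h (Sum.inl i)), ?_⟩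
  ext (i | i) <;> simp [vecMul_fromBlocks, hu, hB]

theorem exists_vecMul_fromBlocks_eq_smul_of_inr {A : Matrix ι ι R} {B : Matrix ι κ R}
    {C : Matrix κ ι R} {D : Matrix κ κ R} {lam : R} {u : κ → R} (hu0 : u ≠ 0)
    (hu : u ᵥ* D = lam • u) (hC : u ᵥ* C = 0) :
    ∃ v ≠ 0, v ᵥ* fromBlocks A B C D = lam • v := by
  refine ⟨Sum.elim 0 u, fun h => hu0 (funext fun i => by simpa using congrFun h (Sum.inr i)), ?_⟩
  ext (i | i) <;> simp [vecMul_fromBlocks, hu, hC]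

end Matrix

theorem RowStochastic.map_smul_mulVec_one {S ι κ : Type*} [Fintype κ] [Semiring S]
    {T : Matrix ι κ ℝ} (hT : RowStochastic T) (f : ℝ →+* S) (c : ℝ) :
    (c • T).map f *ᵥ 1 = f c • 1 := by
  ext i
  simp [mulVec, dotProduct, ← map_sum, ← mul_sum, hT.2 i]

theorem mean_field_block_eigenvalues_general {n1 n2 : ℕ}
    (d1 d2 m : ℝ)
    (α12 α21 : ℝ)
    (TA1 : Matrix (Fin n1) (Fin n1) ℝ) (TA2 : Matrix (Fin n2) (Fin n2) ℝ)
    (hTA1 : RowStochastic TA1) (hTA2 : RowStochastic TA2)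
    (Th : Matrix (Fin n1 ⊕ Fin n2) (Fin n1 ⊕ Fin n2) ℝ)
    (hll : ∀ i j, Th (Sum.inl i) (Sum.inl j) = (1 - α12) * TA1 i j)
    (hlr : ∀ i j, Th (Sum.inl i) (Sum.inr j) = m / (n2 * (n1 * d1 + m)))
    (hrl : ∀ i j, Th (Sum.inr i) (Sum.inl j) = m / (n1 * (n2 * d2 + m)))
    (hrr : ∀ i j, Th (Sum.inr i) (Sum.inr j) = (1 - α21) * TA2 i j) :
    (∀ lam : ℂ, lam ≠ ((1 - α12 : ℝ) : ℂ) →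
      (∃ u : Fin n1 → ℂ, u ≠ 0 ∧
        u ᵥ* (((1 - α12) • TA1).map (Complex.ofReal)) = lam • u) →
      ∃ v : Fin n1 ⊕ Fin n2 → ℂ, v ≠ 0 ∧
        v ᵥ* (Th.map (Complex.ofReal)) = lam • v)
    ∧ (∀ lam : ℂ, lam ≠ ((1 - α21 : ℝ) : ℂ) →
      (∃ u : Fin n2 → ℂ, u ≠ 0 ∧
        u ᵥ* (((1 - α21) • TA2).map (Complex.ofReal)) = lam • u) →
      ∃ v : Fin n1 ⊕ Fin n2 → ℂ, v ≠ 0 ∧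
        v ᵥ* (Th.map (Complex.ofReal)) = lam • v) := by
  have hblocks : Th.map Complex.ofReal =
      fromBlocks (((1 - α12) • TA1).map Complex.ofReal)
        (replicateRow _ fun _ => ((m / (n2 * (n1 * d1 + m)) : ℝ) : ℂ))
        (replicateRow _ fun _ => ((m / (n1 * (n2 * d2 + m)) : ℝ) : ℂ))
        (((1 - α21) • TA2).map Complex.ofReal) := by
    ext (i | i) (j | j) <;> simp [hll, hlr, hrl, hrr, replicateRow_apply]
  rw [hblocks]
  constructor
  · rintro lam hlam ⟨u, hu0, hu⟩
    have hsum := sum_eq_zero_of_vecMul_eq_smul (hTA1.map_smul_mulVec_one Complex.ofRealHom _)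
      hlam hu
    exact exists_vecMul_fromBlocks_eq_smul_of_inl hu0 hu
      (by rw [vecMul_replicateRow, hsum, zero_smul])
  · rintro lam hlam ⟨u, hu0, hu⟩
    have hsum := sum_eq_zero_of_vecMul_eq_smul (hTA2.map_smul_mulVec_one Complex.ofRealHom _)
      hlam hu
    exact exists_vecMul_fromBlocks_eq_smul_of_inr hu0 hu
      (by rw [vecMul_replicateRow, hsum, zero_smul])

/-- Mean-field two-layer supra-transition matrix with known intra-layer topology:
every eigenvalue of `(1−α₁₂)T(A₁)` other than its largest eigenvalue `1−α₁₂`, and every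
eigenvalue of `(1−α₂₁)T(A₂)` other than its largest eigenvalue `1−α₂₁`, is an eigenvalue
of the mean-field matrix `T̂`. -/
theorem mean_field_block_eigenvalues {n1 n2 : ℕ}
    (d1 d2 m : ℝ) (hden1 : 0 < n1 * d1 + m) (hden2 : 0 < n2 * d2 + m)
    (α12 α21 : ℝ)
    (hα12 : α12 = m / (n1 * d1 + m)) (hα21 : α21 = m / (n2 * d2 + m))
    (TA1 : Matrix (Fin n1) (Fin n1) ℝ) (TA2 : Matrix (Fin n2) (Fin n2) ℝ)
    (hTA1 : RowStochastic TA1) (hTA2 : RowStochastic TA2)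
    (Th : Matrix (Fin n1 ⊕ Fin n2) (Fin n1 ⊕ Fin n2) ℝ)
    (hll : ∀ i j, Th (Sum.inl i) (Sum.inl j) = (1 - α12) * TA1 i j)
    (hlr : ∀ i j, Th (Sum.inl i) (Sum.inr j) = m / (n2 * (n1 * d1 + m)))
    (hrl : ∀ i j, Th (Sum.inr i) (Sum.inl j) = m / (n1 * (n2 * d2 + m)))
    (hrr : ∀ i j, Th (Sum.inr i) (Sum.inr j) = (1 - α21) * TA2 i j) :
    (∀ lam : ℂ, lam ≠ ((1 - α12 : ℝ) : ℂ) →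
      (∃ u : Fin n1 → ℂ, u ≠ 0 ∧
        u ᵥ* (((1 - α12) • TA1).map (Complex.ofReal)) = lam • u) →
      ∃ v : Fin n1 ⊕ Fin n2 → ℂ, v ≠ 0 ∧
        v ᵥ* (Th.map (Complex.ofReal)) = lam • v)
    ∧ (∀ lam : ℂ, lam ≠ ((1 - α21 : ℝ) : ℂ) →
      (∃ u : Fin n2 → ℂ, u ≠ 0 ∧
        u ᵥ* (((1 - α21) • TA2).map (Complex.ofReal)) = lam • u) →
      ∃ v : Fin n1 ⊕ Fin n2 → ℂ, v ≠ 0 ∧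
        v ᵥ* (Th.map (Complex.ofReal)) = lam • v) :=
  mean_field_block_eigenvalues_general d1 d2 m α12 α21 TA1 TA2 hTA1 hTA2 Th hll hlr hrl hrr
end
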